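/- arXiv:1802.09250 — 3 statements merged into one kernel-verified Lean document; each statement's English description precedes it below -/
import Mathlib

section
/- A graph G is a threshold graph (i.e., there exist a nonnegative real-valued function f on V(G) and a real t ≥ 0 such that distinct u,v are adjacent iff f(u)+f(v) > t) if and only if its degree partition satisfies: for vertices x ∈ D_i and y ∈ D_j (i ≠ j or x ≠ y), x is adjacent to y if and only if i + j > m. -/
open SimpleGraph Finset

/-- A threshold graph: there exist a nonnegative vertex weight function and a
nonnegative threshold `t` such that distinct vertices are adjacent iff the sum
of their weights exceeds `t`. -/
def SimpleGraph.IsThreshold {V : Type} (G : SimpleGraph V) : Prop :=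
  ∃ (f : V → ℝ) (t : ℝ), (∀ v, 0 ≤ f v) ∧ 0 ≤ t ∧
    ∀ u v : V, u ≠ v → (G.Adj u v ↔ f u + f v > t)

/-- Degree of a vertex (no decidability assumptions). -/
noncomputable def SimpleGraph.deg {V : Type} [Fintype V] (G : SimpleGraph V) (v : V) : ℕ :=
  Nat.card {u // G.Adj v u}

/-- `δ 0 = 0 < δ 1 < ⋯ < δ m` are exactly the degrees occurring in `G`;
the degree partition of `G` is `D_i = {v : deg v = δ i}`, `i = 0, …, m`. -/
structure SimpleGraph.DegreePartition {V : Type} [Fintype V] (G : SimpleGraph V)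
    (m : ℕ) (δ : ℕ → ℕ) : Prop where
  zero : δ 0 = 0
  mono : ∀ i j, i < j → j ≤ m → δ i < δ j
  cover : ∀ v : V, ∃ i ≤ m, G.deg v = δ i
  attained : ∀ i, 1 ≤ i → i ≤ m → ∃ v : V, G.deg v = δ i

/-- The degree set `D_i` of the degree partition. -/
noncomputable def SimpleGraph.Dset {V : Type} [Fintype V] (G : SimpleGraph V)
    (δ : ℕ → ℕ) (i : ℕ) : Finset V :=
  Finset.univ.filter (fun v => G.deg v = δ i)

/-- A key edge of a threshold graph with degree partition `D_0, …, D_m`: an edge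
joining `D_k` and `D_{m+1-k}` for some `1 ≤ k ≤ ⌈m/2⌉`. -/
def SimpleGraph.IsKeyEdge {V : Type} [Fintype V] (G : SimpleGraph V)
    (m : ℕ) (δ : ℕ → ℕ) (e : Sym2 V) : Prop :=
  e ∈ G.edgeSet ∧ ∃ x y k, e = s(x, y) ∧ 1 ≤ k ∧ k ≤ (m + 1) / 2 ∧
    G.deg x = δ k ∧ G.deg y = δ (m + 1 - k)

/-- The number of Hamilton cycles of `G`, counted as unordered spanning cycles
(a cycle is identified with its edge set). -/
noncomputable def SimpleGraph.hamCycleCount {V : Type} [Fintype V] [DecidableEq V]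
    (G : SimpleGraph V) : ℕ :=
  Nat.card {s : Finset (Sym2 V) // ∃ (v : V) (w : G.Walk v v),
    w.IsHamiltonianCycle ∧ w.edges.toFinset = s}

/-- The multiset of degrees of `G`. -/
noncomputable def SimpleGraph.degMultiset {V : Type} [Fintype V] (G : SimpleGraph V) :
    Multiset ℕ :=
  Finset.univ.val.map G.deg

/-- The degree sequence `n-1, n-1, n-2, …, ⌈n/2⌉, ⌈n/2⌉, …, 3, 2` of the graph `Gₙ`,
as a multiset: the values `2, …, n-1` together with an extra copy of `⌈n/2⌉` and of `n-1`. -/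
def gnDegSeq (n : ℕ) : Multiset ℕ :=
  (Multiset.range (n - 2)).map (· + 2) + {(n + 1) / 2, n - 1}

/-- An independent set in a graph. -/
def SimpleGraph.IsIndepSetOld {V : Type} (G : SimpleGraph V) (S : Set V) : Prop :=
  ∀ u ∈ S, ∀ v ∈ S, u ≠ v → ¬ G.Adj u v

/-!
Threshold weights make neighbourhoods nested along degrees: if `deg u ≤ deg v` then every
neighbour of `u` other than `v` is a neighbour of `v`. Consequently a vertex `x` of level
`k ≥ 1` of the degree partition is adjacent to exactly the other vertices of level at least
`r k`, the least level adjacent to level `k`. The degree of `x` is then determined by `r k`,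
so strict monotonicity of the degrees `δ₁ < ⋯ < δₘ` forces `r` to be strictly antitone from
`{1, …, m}` to itself, i.e. `r k = m + 1 - k`. Conversely the level itself is a threshold weight.
-/

theorem Nat.add_sub_le_of_strictAntiOn_Icc {r : ℕ → ℕ} {m : ℕ}
    (hr : StrictAntiOn r (Set.Icc 1 m)) {a b : ℕ} (ha : 1 ≤ a) (hab : a ≤ b)
    (hb : b ≤ m) : r b + (b - a) ≤ r a := by
  induction b, hab using Nat.le_induction with
  | base => simp
  | succ b hab ih =>
    have hlt : r (b + 1) < r b := hr ⟨by omega, by omega⟩ ⟨by omega, hb⟩ (Nat.lt_succ_self b)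
    have := ih (by omega)
    omega

theorem Nat.eq_add_one_sub_of_strictAntiOn_Icc {r : ℕ → ℕ} {m : ℕ}
    (hr : StrictAntiOn r (Set.Icc 1 m)) (hmaps : Set.MapsTo r (Set.Icc 1 m) (Set.Icc 1 m))
    {k : ℕ} (hk : k ∈ Set.Icc 1 m) : r k = m + 1 - k := by
  obtain ⟨hk1, hkm⟩ := hk
  have hupper := Nat.add_sub_le_of_strictAntiOn_Icc hr le_rfl hk1 hkm
  have hlower := Nat.add_sub_le_of_strictAntiOn_Icc hr hk1 hkm le_rfl
  have h1 := (hmaps ⟨le_rfl, hk1.trans hkm⟩).2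
  have hm := (hmaps ⟨hk1.trans hkm, le_rfl⟩).1
  omega

namespace SimpleGraph

variable {V : Type}

theorem isThreshold_of_adj_iff_lt_add {G : SimpleGraph V}
    (ℓ : V → ℕ) (m : ℕ) (h : ∀ x y, x ≠ y → (G.Adj x y ↔ m < ℓ x + ℓ y)) : G.IsThreshold :=
  ⟨fun v => ℓ v, m, fun _ => Nat.cast_nonneg _, Nat.cast_nonneg _, fun u v huv => by
    simp only [h u v huv, gt_iff_lt]
    norm_cast⟩

-- `0`, the junk value of `sInf ∅`, when no vertex of level `k` has a neighbour.
noncomputable def minAdjLevel (G : SimpleGraph V) (ℓ : V → ℕ) (k : ℕ) : ℕ :=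
  sInf {j | ∃ a b, G.Adj a b ∧ ℓ a = k ∧ ℓ b = j}

theorem minAdjLevel_le {G : SimpleGraph V} {ℓ : V → ℕ} {a b : V} (hab : G.Adj a b) :
    G.minAdjLevel ℓ (ℓ a) ≤ ℓ b :=
  Nat.sInf_le (by exact ⟨a, b, hab, rfl, rfl⟩)

variable [Fintype V]

def IsNestedByDegree (G : SimpleGraph V) [DecidableRel G.Adj] : Prop :=
  ∀ ⦃u v w : V⦄, G.degree u ≤ G.degree v → G.Adj u w → v ≠ w → G.Adj v w

variable {G : SimpleGraph V} [DecidableRel G.Adj]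

theorem deg_eq_degree (v : V) : G.deg v = G.degree v := by
  rw [deg, ← card_neighborSet_eq_degree, ← Nat.card_eq_fintype_card]
  rfl

theorem card_erase_neighborFinset_add_degree [DecidableEq V] (u v : V) :
    #((G.neighborFinset u).erase v) + G.degree v =
      #((G.neighborFinset v).erase u) + G.degree u := by
  by_cases h : G.Adj u v
  · rw [card_erase_of_mem (by simpa using h), card_erase_of_mem (by simpa using h.symm),
      card_neighborFinset_eq_degree, card_neighborFinset_eq_degree]
    have hu := (G.degree_pos_iff_exists_adj u).2 ⟨v, h⟩
    have hv := (G.degree_pos_iff_exists_adj v).2 ⟨u, h.symm⟩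
    omega
  · rw [erase_eq_of_notMem (by simpa using h),
      erase_eq_of_notMem (by simpa using fun h' => h h'.symm), card_neighborFinset_eq_degree,
      card_neighborFinset_eq_degree, add_comm]

theorem IsThreshold.isNestedByDegree (hG : G.IsThreshold) : G.IsNestedByDegree := by
  classical
  obtain ⟨f, t, -, -, hf⟩ := hG
  intro u v w hdeg huw hvw
  rcases le_or_gt (f u) (f v) with hle | hlt
  · exact (hf v w hvw).2 (by linarith [(hf u w huw.ne).1 huw])
  -- Now `f v < f u` gives the reverse inclusion, which `deg u ≤ deg v` makes an equality.
  have hsub : (G.neighborFinset v).erase u ⊆ (G.neighborFinset u).erase v := by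
    intro x hx
    simp only [mem_erase, mem_neighborFinset] at hx ⊢
    exact ⟨hx.2.ne', (hf u x hx.1.symm).2 (by linarith [(hf v x hx.2.ne).1 hx.2])⟩
  have heq := eq_of_subset_of_card_le hsub
    (by have := G.card_erase_neighborFinset_add_degree u v; omega)
  have hw : w ∈ (G.neighborFinset u).erase v := by simp [huw, hvw.symm]
  rw [← heq] at hw
  simpa using (mem_erase.1 hw).2

theorem IsNestedByDegree.adj_of_degree_le (hN : G.IsNestedByDegree) {a b x y : V}
    (hab : G.Adj a b) (hax : G.degree a ≤ G.degree x) (hby : G.degree b ≤ G.degree y)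
    (hxy : x ≠ y) : G.Adj x y := by
  by_cases hxb : x = b
  · subst hxb
    exact (hN (hax.trans hby) hab hxy.symm).symm
  · exact (hN hby (hN hax hab hxb).symm hxy.symm).symm

section Levels

variable {ℓ : V → ℕ} {m : ℕ}

theorem exists_adj_eq_minAdjLevel {x : V} (hx : G.degree x ≠ 0) :
    ∃ a b, G.Adj a b ∧ ℓ a = ℓ x ∧ ℓ b = G.minAdjLevel ℓ (ℓ x) := by
  obtain ⟨z, hz⟩ := (G.degree_pos_iff_exists_adj x).1 (Nat.pos_of_ne_zero hx)
  exact Nat.sInf_mem (s := {j | ∃ a b, G.Adj a b ∧ ℓ a = ℓ x ∧ ℓ b = j})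
    ⟨ℓ z, x, z, hz, rfl, rfl⟩

theorem IsNestedByDegree.adj_iff_minAdjLevel_le (hN : G.IsNestedByDegree)
    (hℓ : ∀ u v, ℓ u ≤ ℓ v ↔ G.degree u ≤ G.degree v) {x y : V} (hx : G.degree x ≠ 0)
    (hxy : x ≠ y) : G.Adj x y ↔ G.minAdjLevel ℓ (ℓ x) ≤ ℓ y := by
  refine ⟨minAdjLevel_le, fun h => ?_⟩
  obtain ⟨a, b, hab, ha, hb⟩ := exists_adj_eq_minAdjLevel (ℓ := ℓ) hx
  exact hN.adj_of_degree_le hab ((hℓ a x).1 ha.le) ((hℓ b y).1 (hb ▸ h)) hxy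

theorem IsNestedByDegree.minAdjLevel_lt [DecidableEq V] (hN : G.IsNestedByDegree)
    (hℓ : ∀ u v, ℓ u ≤ ℓ v ↔ G.degree u ≤ G.degree v) {x x' : V} (hx : G.degree x ≠ 0)
    (hxx' : ℓ x < ℓ x') :
    G.minAdjLevel ℓ (ℓ x') < G.minAdjLevel ℓ (ℓ x) := by
  have hdeg : G.degree x < G.degree x' := lt_of_not_ge ((hℓ x' x).not.1 (not_le.2 hxx'))
  have hne : x ≠ x' := by rintro rfl; exact lt_irrefl _ hxx'
  obtain ⟨a, b, hab, ha, hb⟩ := exists_adj_eq_minAdjLevel (ℓ := ℓ) hx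
  have hle : G.minAdjLevel ℓ (ℓ x') ≤ G.minAdjLevel ℓ (ℓ x) := by
    by_cases hx'b : x' = b
    · subst hx'b
      exact (minAdjLevel_le hab.symm).trans (by omega)
    · have had : G.degree a ≤ G.degree x' := (hℓ a x').1 (by omega)
      exact hb ▸ minAdjLevel_le (hN had hab hx'b)
  -- Equal least adjacent levels would give `x` and `x'` the same neighbourhoods, hence degrees.
  refine hle.lt_of_ne fun heq => hdeg.ne ?_
  have hnbr : (G.neighborFinset x).erase x' = (G.neighborFinset x').erase x := by
    ext y
    simp only [mem_erase, mem_neighborFinset]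
    by_cases hyx : y = x
    · subst hyx; simp
    by_cases hyx' : y = x'
    · subst hyx'; simp
    rw [hN.adj_iff_minAdjLevel_le hℓ hx (Ne.symm hyx),
      hN.adj_iff_minAdjLevel_le hℓ (by omega) (Ne.symm hyx'), heq]
    tauto
  have := G.card_erase_neighborFinset_add_degree x x'
  rw [hnbr] at this
  omega

variable (hN : G.IsNestedByDegree) (hℓ : ∀ u v, ℓ u ≤ ℓ v ↔ G.degree u ≤ G.degree v)
  (hzero : ∀ v, ℓ v = 0 ↔ G.degree v = 0) (hle : ∀ v, ℓ v ≤ m)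
  (hsurj : ∀ k ∈ Set.Icc 1 m, ∃ v, ℓ v = k)
include hN hℓ hzero hle hsurj

theorem IsNestedByDegree.minAdjLevel_eq {k : ℕ} (hk : k ∈ Set.Icc 1 m) :
    G.minAdjLevel ℓ k = m + 1 - k := by
  classical
  refine Nat.eq_add_one_sub_of_strictAntiOn_Icc ?_ ?_ hk
  · intro i hi j hj hij
    obtain ⟨x, rfl⟩ := hsurj i hi
    obtain ⟨x', rfl⟩ := hsurj j hj
    exact hN.minAdjLevel_lt hℓ (mt (hzero x).2 (by have := hi.1; omega)) hij
  · intro i hi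
    obtain ⟨x, rfl⟩ := hsurj i hi
    obtain ⟨a, b, hab, -, hb⟩ :=
      exists_adj_eq_minAdjLevel (ℓ := ℓ) (mt (hzero x).2 (by have := hi.1; omega))
    have hb0 : G.degree b ≠ 0 := ((G.degree_pos_iff_exists_adj b).2 ⟨a, hab.symm⟩).ne'
    exact hb ▸ ⟨Nat.pos_of_ne_zero (mt (hzero b).1 hb0), hle b⟩

theorem IsNestedByDegree.adj_iff_lt_add {x y : V} (hxy : x ≠ y) :
    G.Adj x y ↔ m < ℓ x + ℓ y := by
  have hisolated : ∀ v w, ℓ v = 0 → ¬ G.Adj v w := fun v w hv hvw =>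
    ((G.degree_pos_iff_exists_adj v).2 ⟨w, hvw⟩).ne' ((hzero v).1 hv)
  rcases Nat.eq_zero_or_pos (ℓ x) with hx | hx
  · simpa [hisolated x y hx, hx] using hle y
  rcases Nat.eq_zero_or_pos (ℓ y) with hy | hy
  · have hnadj : ¬ G.Adj x y := fun h => hisolated y x hy h.symm
    simpa [hnadj, hy] using hle x
  rw [hN.adj_iff_minAdjLevel_le hℓ (mt (hzero x).2 hx.ne') hxy,
    hN.minAdjLevel_eq hℓ hzero hle hsurj ⟨hx, hle x⟩]
  omega

end Levels

omit [DecidableRel G.Adj] in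
theorem DegreePartition.strictMonoOn {m : ℕ} {δ : ℕ → ℕ} (hdp : G.DegreePartition m δ) :
    StrictMonoOn δ (Set.Iic m) :=
  fun i _ j hj hij => hdp.mono i j hij hj

theorem DegreePartition.isThreshold_iff {m : ℕ} {δ : ℕ → ℕ} (hdp : G.DegreePartition m δ)
    {ℓ : V → ℕ} (hℓm : ∀ v, ℓ v ≤ m) (hℓδ : ∀ v, G.degree v = δ (ℓ v)) :
    G.IsThreshold ↔ ∀ x y, x ≠ y → (G.Adj x y ↔ m < ℓ x + ℓ y) := by
  have hδ := hdp.strictMonoOn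
  refine ⟨fun hG x y => hG.isNestedByDegree.adj_iff_lt_add ?_ ?_ hℓm ?_,
    isThreshold_of_adj_iff_lt_add ℓ m⟩
  · intro u v
    rw [hℓδ u, hℓδ v]
    exact (hδ.le_iff_le (hℓm u) (hℓm v)).symm
  · intro v
    rw [hℓδ v, ← hδ.eq_iff_eq (hℓm v) (Nat.zero_le m), hdp.zero]
  · rintro k ⟨hk1, hkm⟩
    obtain ⟨v, hv⟩ := hdp.attained k hk1 hkm
    rw [deg_eq_degree, hℓδ v] at hv
    exact ⟨v, (hδ.eq_iff_eq (hℓm v) hkm).1 hv⟩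

end SimpleGraph

/-- a graph is threshold iff, in terms of its degree partition,
`x ∈ D_i` and `y ∈ D_j` are adjacent iff `i + j > m`. -/
theorem stmt0 {V : Type} [Fintype V] (G : SimpleGraph V) (m : ℕ) (δ : ℕ → ℕ)
    (hdp : G.DegreePartition m δ) :
    G.IsThreshold ↔
      ∀ (x y : V) (i j : ℕ), x ≠ y → i ≤ m → j ≤ m →
        G.deg x = δ i → G.deg y = δ j → (G.Adj x y ↔ i + j > m) := by
  classical
  choose ℓ hℓm hℓδ using hdp.cover
  simp only [deg_eq_degree] at hℓδ ⊢
  have hlevel : ∀ v i, i ≤ m → G.degree v = δ i → ℓ v = i := fun v i hi hv =>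
    (hdp.strictMonoOn.eq_iff_eq (hℓm v) hi).1 (hℓδ v ▸ hv)
  rw [hdp.isThreshold_iff hℓm hℓδ]
  constructor
  · intro h x y i j hxy hi hj hx hy
    rw [← hlevel x i hi hx, ← hlevel y j hj hy]
    exact h x y hxy
  · intro h x y hxy
    exact h x y (ℓ x) (ℓ y) hxy (hℓm x) (hℓm y) (hℓδ x) (hℓδ y)
end

section
/- If e is a key edge of a threshold graph G, then the graph G − e obtained by deleting e is again a threshold graph. -/
open SimpleGraph Finset

/-- An independent set in a graph. -/
def SimpleGraph.IsIndepSet' {V : Type} (G : SimpleGraph V) (S : Set V) : Prop :=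
  ∀ u ∈ S, ∀ v ∈ S, u ≠ v → ¬ G.Adj u v

/-!
Neighbourhoods in a threshold graph are nested along the degree order. Hence the least class
index `c_i` among the neighbours of a vertex of `D_i` determines its neighbourhood, and a counting
argument shows that `c_1 > c_2 > ⋯ > c_m` inside `[1, m]`, so `c_i = m + 1 - i`: two distinct
vertices of `D_i` and `D_j` are adjacent iff `i + j ≥ m + 1`. A key edge `xy` is an edge of
minimal index sum `m + 1`, so taking the class indices as weights, raised by `1/2` at every vertex
other than `x` and `y`, with threshold `m + 1`, represents exactly `G - xy`.
-/

namespace SimpleGraph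

variable {V : Type}

def NestedNeighborhoods [Fintype V] (G : SimpleGraph V) : Prop :=
  ∀ a b v, G.deg a ≤ G.deg b → G.Adj a v → v ≠ b → G.Adj b v

section Degree

variable [Fintype V] (G : SimpleGraph V)

lemma deg_eq_ncard (v : V) : G.deg v = (G.neighborSet v).ncard :=
  Nat.card_coe_set_eq _

lemma deg_pos_iff {v : V} : 0 < G.deg v ↔ ∃ w, G.Adj v w := by
  rw [deg_eq_ncard, Set.ncard_pos (Set.toFinite _)]
  rfl

variable {G}

/-- The swap `a ↔ b` injects `N(b)` into `N(a) \ {v}`. -/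
lemma deg_lt_deg_of_weight_le {f : V → ℝ} {t : ℝ}
    (hft : ∀ u v : V, u ≠ v → (G.Adj u v ↔ f u + f v > t)) {a b v : V}
    (hba : f b ≤ f a) (hav : G.Adj a v) (hbv : ¬G.Adj b v) (hvb : v ≠ b) :
    G.deg b < G.deg a := by
  classical
  have hmaps : ∀ w ∈ G.neighborSet b, Equiv.swap a b w ∈ G.neighborSet a \ {v} := by
    intro w hw
    rw [mem_neighborSet] at hw
    by_cases hwa : w = a
    · subst hwa
      simpa [Equiv.swap_apply_left, hvb.symm] using hw.symm
    · rw [Equiv.swap_apply_of_ne_of_ne hwa hw.ne.symm]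
      refine ⟨(hft a w (Ne.symm hwa)).2 ?_, fun hwv => hbv (hwv ▸ hw)⟩
      linarith [(hft b w hw.ne).1 hw]
  have hle := Set.ncard_le_ncard_of_injOn _ hmaps (Equiv.injective _).injOn (Set.toFinite _)
  rw [Set.ncard_sdiff_singleton_of_mem (show v ∈ G.neighborSet a from hav)] at hle
  have hpos : 0 < (G.neighborSet a).ncard := Set.ncard_pos (Set.toFinite _) |>.2 ⟨v, hav⟩
  rw [deg_eq_ncard, deg_eq_ncard]
  omega

theorem IsThreshold.nestedNeighborhoods (hG : G.IsThreshold) : G.NestedNeighborhoods := by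
  obtain ⟨f, t, -, -, hft⟩ := hG
  intro a b v hab hav hvb
  by_contra hbv
  rcases le_or_gt (f a) (f b) with h | h
  · exact hbv ((hft b v hvb.symm).2 (by linarith [(hft a v hav.ne).1 hav]))
  · exact absurd hab (not_le.2 (deg_lt_deg_of_weight_le hft h.le hav hbv hvb))

end Degree

namespace DegreePartition

variable [Fintype V] {G : SimpleGraph V} {m : ℕ} {δ : ℕ → ℕ} (hdp : G.DegreePartition m δ)

/-- The index `i` of the class `D_i` containing `v`. -/
noncomputable def index (v : V) : ℕ := Classical.choose (hdp.cover v)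

lemma index_le (v : V) : hdp.index v ≤ m := (Classical.choose_spec (hdp.cover v)).1

lemma deg_eq (v : V) : G.deg v = δ (hdp.index v) := (Classical.choose_spec (hdp.cover v)).2

lemma strictMonoOn_s3 (hdp : G.DegreePartition m δ) : StrictMonoOn δ (Set.Iic m) :=
  fun i _ j hj hij => hdp.mono i j hij hj

lemma index_eq_of_deg_eq {v : V} {i : ℕ} (hi : i ≤ m) (h : G.deg v = δ i) : hdp.index v = i :=
  hdp.strictMonoOn_s3.injOn (hdp.index_le v) hi (by rw [← hdp.deg_eq, h])

lemma index_le_index_iff {a b : V} : hdp.index a ≤ hdp.index b ↔ G.deg a ≤ G.deg b := by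
  rw [hdp.deg_eq, hdp.deg_eq]
  exact (hdp.strictMonoOn_s3.le_iff_le (hdp.index_le a) (hdp.index_le b)).symm

lemma index_pos_iff {v : V} : 0 < hdp.index v ↔ ∃ w, G.Adj v w := by
  have hinj := hdp.strictMonoOn_s3.injOn.ne_iff (hdp.index_le v) (Nat.zero_le m)
  rw [hdp.zero] at hinj
  rw [← G.deg_pos_iff, hdp.deg_eq, Nat.pos_iff_ne_zero, Nat.pos_iff_ne_zero, hinj]

lemma exists_index_eq {i : ℕ} (h1 : 1 ≤ i) (hi : i ≤ m) : ∃ v, hdp.index v = i := by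
  obtain ⟨v, hv⟩ := hdp.attained i h1 hi
  exact ⟨v, hdp.index_eq_of_deg_eq hi hv⟩

/-- Since `sInf ∅ = 0`, this is `0` for an isolated vertex. -/
noncomputable def minNeighborIndex (v : V) : ℕ := sInf (hdp.index '' G.neighborSet v)

variable {hdp}

lemma minNeighborIndex_le_index {u v : V} (h : G.Adj u v) :
    hdp.minNeighborIndex u ≤ hdp.index v :=
  Nat.sInf_le ⟨v, h, rfl⟩

lemma exists_adj_index_eq_minNeighborIndex {u : V} (hu : 0 < hdp.index u) :
    ∃ w, G.Adj u w ∧ hdp.index w = hdp.minNeighborIndex u := by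
  obtain ⟨w, hw⟩ := hdp.index_pos_iff.1 hu
  exact Nat.sInf_mem (Set.Nonempty.image _ ⟨w, hw⟩)

lemma minNeighborIndex_mem_Icc {u : V} (hu : 0 < hdp.index u) :
    hdp.minNeighborIndex u ∈ Finset.Icc 1 m := by
  obtain ⟨w, huw, hw⟩ := exists_adj_index_eq_minNeighborIndex hu
  rw [← hw, Finset.mem_Icc]
  exact ⟨hdp.index_pos_iff.2 ⟨u, huw.symm⟩, hdp.index_le w⟩

lemma adj_iff_minNeighborIndex_le (hnest : G.NestedNeighborhoods) {u v : V}
    (hu : 0 < hdp.index u) : G.Adj u v ↔ v ≠ u ∧ hdp.minNeighborIndex u ≤ hdp.index v := by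
  refine ⟨fun h => ⟨h.ne.symm, minNeighborIndex_le_index h⟩, fun ⟨hvu, hv⟩ => ?_⟩
  obtain ⟨w, huw, hw⟩ := exists_adj_index_eq_minNeighborIndex hu
  exact (hnest w v u (hdp.index_le_index_iff.1 (hw ▸ hv)) huw.symm hvu.symm).symm

lemma minNeighborIndex_le_of_index_le (hnest : G.NestedNeighborhoods) {u u' : V}
    (hu : 0 < hdp.index u) (h : hdp.index u ≤ hdp.index u') :
    hdp.minNeighborIndex u' ≤ hdp.minNeighborIndex u := by
  obtain ⟨w, huw, hw⟩ := exists_adj_index_eq_minNeighborIndex hu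
  by_cases hwu' : w = u'
  · subst hwu'
    exact (minNeighborIndex_le_index huw.symm).trans (h.trans hw.le)
  · exact hw ▸ minNeighborIndex_le_index (hnest u u' w (hdp.index_le_index_iff.1 h) huw hwu')

/-- If two classes had the same least neighbour index `c`, the neighbourhoods of their vertices
would both be `{v | c ≤ index v}` minus the vertex itself, forcing equal degrees. -/
lemma minNeighborIndex_lt_of_index_lt (hnest : G.NestedNeighborhoods) {u u' : V}
    (hu : 0 < hdp.index u) (h : hdp.index u < hdp.index u') :
    hdp.minNeighborIndex u' < hdp.minNeighborIndex u := by
  by_contra hle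
  rw [not_lt] at hle
  set S := {v | hdp.minNeighborIndex u ≤ hdp.index v}
  have hNu : G.neighborSet u = S \ {u} := by
    ext v
    simp [S, adj_iff_minNeighborIndex_le hnest hu, and_comm]
  have hNu' : G.neighborSet u' ⊆ S \ {u'} := fun v hv => by
    rw [mem_neighborSet, adj_iff_minNeighborIndex_le hnest (hu.trans h)] at hv
    exact ⟨hle.trans hv.2, hv.1⟩
  have hS : (S \ {u'}).ncard ≤ (S \ {u}).ncard := by
    by_cases huS : u ∈ S
    · have hu'S : u' ∈ S := le_trans huS h.le
      rw [Set.ncard_sdiff_singleton_of_mem huS, Set.ncard_sdiff_singleton_of_mem hu'S]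
    · rw [Set.sdiff_singleton_eq_self huS]
      exact Set.ncard_le_ncard Set.sdiff_subset
  have hdeg : G.deg u' ≤ G.deg u := by
    rw [deg_eq_ncard, deg_eq_ncard, hNu]
    exact (Set.ncard_le_ncard hNu').trans hS
  exact absurd (hdp.index_le_index_iff.2 hdeg) (not_le.2 h)

lemma minNeighborIndex_add_le (hnest : G.NestedNeighborhoods) {u : V} (hu : 0 < hdp.index u) :
    ∀ (d : ℕ) (u' : V), hdp.index u' = hdp.index u + d →
      hdp.minNeighborIndex u' + d ≤ hdp.minNeighborIndex u
  | 0, _, h => minNeighborIndex_le_of_index_le hnest hu h.ge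
  | d + 1, u', h => by
    obtain ⟨w, hw⟩ := hdp.exists_index_eq (i := hdp.index u + d) (by omega)
      (by have := hdp.index_le u'; omega)
    have hlt := minNeighborIndex_lt_of_index_lt hnest (u := w) (u' := u') (by omega) (by omega)
    have := minNeighborIndex_add_le hnest hu d w hw
    omega

lemma minNeighborIndex_eq (hnest : G.NestedNeighborhoods) {u : V} (hu : 0 < hdp.index u) :
    hdp.minNeighborIndex u = m + 1 - hdp.index u := by
  have hum := hdp.index_le u
  obtain ⟨u₁, hu₁⟩ := hdp.exists_index_eq le_rfl (by omega)
  obtain ⟨uₘ, huₘ⟩ := hdp.exists_index_eq (by omega) le_rfl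
  have hup := minNeighborIndex_add_le hnest (u := u₁) (by omega) (hdp.index u - 1) u (by omega)
  have hlow := minNeighborIndex_add_le hnest hu (m - hdp.index u) uₘ (by omega)
  have h₁ := Finset.mem_Icc.1 (minNeighborIndex_mem_Icc (hdp := hdp) (u := u₁) (by omega))
  have hₘ := Finset.mem_Icc.1 (minNeighborIndex_mem_Icc (hdp := hdp) (u := uₘ) (by omega))
  omega

variable (hdp)

theorem adj_iff_index_add (hnest : G.NestedNeighborhoods) {u v : V} (huv : u ≠ v) :
    G.Adj u v ↔ m + 1 ≤ hdp.index u + hdp.index v := by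
  have hum := hdp.index_le u
  have hvm := hdp.index_le v
  rcases Nat.eq_zero_or_pos (hdp.index u) with hu | hu
  · have hiso : ¬G.Adj u v := fun h => (hdp.index_pos_iff.2 ⟨v, h⟩).ne' hu
    simp only [hiso, false_iff]
    omega
  · rw [adj_iff_minNeighborIndex_le hnest hu, minNeighborIndex_eq hnest hu]
    exact ⟨fun h => by omega, fun h => ⟨huv.symm, by omega⟩⟩

end DegreePartition

theorem isThreshold_deleteEdges_of_adj_iff {G : SimpleGraph V} {m : ℕ} {ι : V → ℕ}
    (hadj : ∀ u v, u ≠ v → (G.Adj u v ↔ m + 1 ≤ ι u + ι v)) {x y : V} (hxy : x ≠ y)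
    (hsum : ι x + ι y = m + 1) : (G.deleteEdges {s(x, y)}).IsThreshold := by
  classical
  set ε : V → ℝ := fun v => if v = x ∨ v = y then 0 else 1 / 2
  refine ⟨fun v => ι v + ε v, m + 1, fun v => by positivity, by positivity, fun u v huv => ?_⟩
  rw [deleteEdges_adj, Set.mem_singleton_iff, hadj u v huv]
  by_cases he : s(u, v) = s(x, y)
  · rcases Sym2.eq_iff.1 he with ⟨rfl, rfl⟩ | ⟨rfl, rfl⟩ <;>
      simp [ε, he] <;> exact_mod_cast (by omega : ι u + ι v ≤ m + 1)
  · have hε : 1 / 2 ≤ ε u + ε v ∧ ε u + ε v ≤ 1 := by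
      simp only [ε]
      split_ifs with hu hv hv <;> norm_num
      rcases hu with rfl | rfl <;> rcases hv with rfl | rfl <;> simp_all [Sym2.eq_swap]
    simp only [he, not_false_eq_true, and_true]
    constructor
    · intro h
      have : (m + 1 : ℝ) ≤ ι u + ι v := by exact_mod_cast h
      linarith
    · intro h
      by_contra hlt
      have : (ι u + ι v : ℝ) ≤ m := by exact_mod_cast (by omega : ι u + ι v ≤ m)
      linarith

end SimpleGraph

/-- deleting a key edge of a threshold graph yields a threshold graph. -/
theorem stmt3 {V : Type} [Fintype V] (G : SimpleGraph V) (m : ℕ) (δ : ℕ → ℕ)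
    (hG : G.IsThreshold) (hdp : G.DegreePartition m δ)
    (e : Sym2 V) (he : G.IsKeyEdge m δ e) :
    (G.deleteEdges {e}).IsThreshold := by
  obtain ⟨hxy, x, y, k, rfl, hk1, hkm, hx, hy⟩ := he
  refine isThreshold_deleteEdges_of_adj_iff
    (fun u v huv => hdp.adj_iff_index_add hG.nestedNeighborhoods huv) (G.ne_of_adj hxy) ?_
  rw [hdp.index_eq_of_deg_eq (by omega) hx, hdp.index_eq_of_deg_eq (by omega) hy]
  omega
end

section
/- The graph G_n has size (number of edges) equal to (n² + 2n − 3)/4 if n is odd and (n² + 2n − 4)/4 if n is even. -/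
open SimpleGraph Finset

/-! By the handshake lemma `2 |E(Gₙ)|` is the sum of the degree sequence, and
`2 + 3 + ⋯ + (n - 1) + ⌈n/2⌉ + (n - 1) = (n (n + 1) + 2 ⌈n/2⌉) / 2 - 2`. -/

theorem SimpleGraph.deg_eq_degree_s16 {V : Type} [Fintype V] (G : SimpleGraph V)
    [DecidableRel G.Adj] (v : V) : G.deg v = G.degree v := by
  rw [deg, ← card_neighborSet_eq_degree, Nat.card_eq_fintype_card]
  rfl

theorem SimpleGraph.sum_degMultiset {V : Type} [Fintype V] (G : SimpleGraph V) :
    G.degMultiset.sum = 2 * Nat.card G.edgeSet := by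
  classical
  change ∑ v, G.deg v = _
  simp only [deg_eq_degree_s16, sum_degrees_eq_twice_card_edges, Nat.card_eq_fintype_card,
    ← edgeFinset_card]

theorem two_mul_sum_gnDegSeq_add_four (n : ℕ) (hn : 2 ≤ n) :
    2 * (gnDegSeq n).sum + 4 = n * (n + 1) + 2 * ((n + 1) / 2) := by
  obtain ⟨m, rfl⟩ := Nat.exists_eq_add_of_le' hn
  have hshift : ((Multiset.range m).map (· + 2)).sum = ∑ i ∈ range m, i + 2 * m := by
    change ∑ i ∈ range m, (i + 2) = _
    rw [sum_add_distrib, sum_const, card_range, smul_eq_mul, mul_comm]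
  have gauss := Finset.sum_range_id_mul_two (m + 1)
  rw [sum_range_succ, Nat.add_sub_cancel] at gauss
  simp only [gnDegSeq, Nat.add_sub_cancel, Multiset.sum_add, Multiset.sum_pair, hshift]
  ring_nf at gauss ⊢
  omega

theorem stmt16_general {V : Type} [Fintype V] (n : ℕ) (hn : 3 ≤ n) (G : SimpleGraph V)
    (hdeg : G.degMultiset = gnDegSeq n) :
    (Odd n → 4 * Nat.card G.edgeSet = n ^ 2 + 2 * n - 3) ∧
    (Even n → 4 * Nat.card G.edgeSet = n ^ 2 + 2 * n - 4) := by
  have key := two_mul_sum_gnDegSeq_add_four n (by omega)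
  rw [← hdeg, sum_degMultiset] at key
  constructor
  · rintro ⟨k, rfl⟩
    rw [show (2 * k + 1 + 1) / 2 = k + 1 by omega] at key
    ring_nf at key ⊢
    omega
  · rintro ⟨k, rfl⟩
    rw [show (k + k + 1) / 2 = k by omega] at key
    ring_nf at key ⊢
    omega

/-- `Gₙ` has `(n² + 2n - 3)/4` edges if `n` is odd and `(n² + 2n - 4)/4`
edges if `n` is even. -/
theorem stmt16 {V : Type} [Fintype V] (n : ℕ) (hn : 3 ≤ n) (G : SimpleGraph V)
    (hG : G.IsThreshold) (hcard : Fintype.card V = n) (hdeg : G.degMultiset = gnDegSeq n) :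
    (Odd n → 4 * Nat.card G.edgeSet = n ^ 2 + 2 * n - 3) ∧
    (Even n → 4 * Nat.card G.edgeSet = n ^ 2 + 2 * n - 4) :=
  stmt16_general n hn G hdeg
end
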